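/- Let f = a_0 + 2a_1 : V_n → Z_4 with a_0, a_1 Boolean functions and n even. If f is gbent, then for any two pairs of vertices {a,b} and {c,d} in the Cayley graph of f (edge weights f(u⊕v) ∈ Z_4), |N_{{2,3}}(a,b)| = |N_{{2,3}}(c,d)|, where N_{{2,3}}(a,b) is the set of vertices w with f(w⊕a) ∈ {2,3} and f(w⊕b) ∈ {2,3}. -/

import Mathlib

/-!
Write `f = a₀ + 2a₁` and `s(p) = (-1)^p`. Pointwise `i^f = ((1+i)/2) s(a₁) + ((1-i)/2) s(a₀+a₁)`,
so `H_f(u) = ((1+i) A + (1-i) B)/2` with `A, B` the Walsh coefficients of `a₁` and `a₀ + a₁`, and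
`|H_f(u)|² = (A² + B²)/2`. Hence `A² + B² = 2^(n+1)`, and since `n` is even this forces
`A² = 2^n`: the Boolean function `a₁` is bent. Now `f(x) ∈ {2,3}` iff `a₁(x) = 1`, and
`4 · 1[a₁(w+a) = 1 ∧ a₁(w+b) = 1] = (1 - s(a₁(w+a)))(1 - s(a₁(w+b)))`; summing over `w`, the cross
term is an autocorrelation of a bent function at the nonzero shift `a + b`, which vanishes. So
`4 |N_{2,3}(a,b)| = 2^n - 2 ∑_w s(a₁(w))` for every pair `a ≠ b`.
-/

open Finset BigOperators

noncomputable def zeta (q : ℕ) : ℂ := Complex.exp (2 * Real.pi * Complex.I / q)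

def dotp {n : ℕ} (u x : Fin n → ZMod 2) : ZMod 2 := ∑ i, u i * x i

noncomputable def chr {n : ℕ} (u x : Fin n → ZMod 2) : ℂ := (-1 : ℂ) ^ (dotp u x).val

noncomputable def WHT {n q : ℕ} (f : (Fin n → ZMod 2) → ZMod q) (u : Fin n → ZMod 2) : ℂ :=
  ∑ x, zeta q ^ (f x).val * chr u x

noncomputable def Amat {n q : ℕ} (f : (Fin n → ZMod 2) → ZMod q) :
    Matrix (Fin n → ZMod 2) (Fin n → ZMod 2) ℂ :=
  fun u v => zeta q ^ (f (u + v)).val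

open Complex

def sgn2 (p : ZMod 2) : ℤ := (-1) ^ p.val

lemma sgn2_add (p q : ZMod 2) : sgn2 (p + q) = sgn2 p * sgn2 q := by
  revert p q; decide

lemma sgn2_add_one (p : ZMod 2) : sgn2 (p + 1) = -sgn2 p := by
  revert p; decide

section Walsh

variable {n : ℕ}

lemma dotp_add_left (u v x : Fin n → ZMod 2) : dotp (u + v) x = dotp u x + dotp v x := by
  simp [dotp, add_mul, sum_add_distrib]

lemma dotp_add_right (u x y : Fin n → ZMod 2) : dotp u (x + y) = dotp u x + dotp u y := by
  simp [dotp, mul_add, sum_add_distrib]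

lemma chr_eq_sgn2 (u x : Fin n → ZMod 2) : chr u x = sgn2 (dotp u x) := by
  simp [chr, sgn2]

lemma sum_sgn2_dotp (z : Fin n → ZMod 2) :
    ∑ u, sgn2 (dotp u z) = if z = 0 then 2 ^ n else 0 := by
  split_ifs with hz
  · simp [hz, dotp, sgn2]
  obtain ⟨i, hi⟩ : ∃ i, z i ≠ 0 := Function.ne_iff.mp hz
  have hδ : dotp (Pi.single i 1) z = 1 := by
    rw [dotp, sum_eq_single i (fun j _ hj => by simp [Pi.single_eq_of_ne hj]) (by simp)]
    simpa using (by decide : ∀ t : ZMod 2, t ≠ 0 → t = 1) _ hi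
  -- translating by `Pi.single i 1` flips the sign of every term
  have hshift := Equiv.sum_comp (Equiv.addRight (Pi.single i 1 : Fin n → ZMod 2))
    (fun u => sgn2 (dotp u z))
  simp only [Equiv.coe_addRight, dotp_add_left, hδ, sgn2_add_one, sum_neg_distrib] at hshift
  linarith

def walsh (g : (Fin n → ZMod 2) → ZMod 2) (u : Fin n → ZMod 2) : ℤ :=
  ∑ x, sgn2 (g x) * sgn2 (dotp u x)

def IsBent (g : (Fin n → ZMod 2) → ZMod 2) : Prop := ∀ u, walsh g u ^ 2 = 2 ^ n

lemma sum_walsh_sq_mul_sgn2 (g : (Fin n → ZMod 2) → ZMod 2) (e : Fin n → ZMod 2) :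
    ∑ u, walsh g u ^ 2 * sgn2 (dotp u e) = 2 ^ n * ∑ w, sgn2 (g w) * sgn2 (g (w + e)) := by
  have hsupp : ∀ x y : Fin n → ZMod 2, x + y + e = 0 ↔ y = x + e := fun x y => by
    rw [add_right_comm, add_comm, add_eq_zero_iff_eq_neg, ZModModule.neg_eq_self]
  calc ∑ u, walsh g u ^ 2 * sgn2 (dotp u e)
      = ∑ x, ∑ y, sgn2 (g x) * sgn2 (g y) * ∑ u, sgn2 (dotp u (x + y + e)) := by
        simp only [sq, walsh, sum_mul, mul_sum, dotp_add_right, sgn2_add]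
        rw [sum_comm]; refine sum_congr rfl fun x _ => ?_
        rw [sum_comm]; refine sum_congr rfl fun y _ => sum_congr rfl fun u _ => by ring
    _ = ∑ x, sgn2 (g x) * sgn2 (g (x + e)) * 2 ^ n := by
        refine sum_congr rfl fun x _ => ?_
        simp only [sum_sgn2_dotp, hsupp, mul_ite, mul_zero, sum_ite_eq', mem_univ, if_true]
    _ = 2 ^ n * ∑ w, sgn2 (g w) * sgn2 (g (w + e)) := by
        rw [mul_sum]; exact sum_congr rfl fun x _ => mul_comm _ _

lemma IsBent.sum_sgn2_mul_sgn2_eq_zero {g : (Fin n → ZMod 2) → ZMod 2} (hg : IsBent g)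
    {a b : Fin n → ZMod 2} (hab : a ≠ b) :
    ∑ w, sgn2 (g (w + a)) * sgn2 (g (w + b)) = 0 := by
  have hab' : a + b ≠ 0 := by rwa [Ne, add_eq_zero_iff_eq_neg, ZModModule.neg_eq_self]
  have hcorr := sum_walsh_sq_mul_sgn2 g (a + b)
  simp only [hg _, ← mul_sum, sum_sgn2_dotp, if_neg hab', mul_zero] at hcorr
  rw [← Equiv.sum_comp (Equiv.addRight a)]
  simpa [add_assoc, ZModModule.add_self] using
    (mul_eq_zero.mp hcorr.symm).resolve_left (by positivity)

lemma IsBent.four_mul_card_filter {g : (Fin n → ZMod 2) → ZMod 2} (hg : IsBent g)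
    {a b : Fin n → ZMod 2} (hab : a ≠ b) :
    4 * (#{w | g (w + a) = 1 ∧ g (w + b) = 1} : ℤ) = 2 ^ n - 2 * ∑ w, sgn2 (g w) := by
  have hind : ∀ p q : ZMod 2, 4 * (if p = 1 ∧ q = 1 then 1 else 0 : ℤ)
      = 1 - sgn2 p - sgn2 q + sgn2 p * sgn2 q := by decide
  have hshift : ∀ v : Fin n → ZMod 2, ∑ w, sgn2 (g (w + v)) = ∑ w, sgn2 (g w) :=
    fun v => Equiv.sum_comp (Equiv.addRight v) (fun w => sgn2 (g w))
  rw [card_filter, Nat.cast_sum, mul_sum]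
  simp only [Nat.cast_ite, Nat.cast_one, Nat.cast_zero, hind, sum_add_distrib, sum_sub_distrib,
    hshift, hg.sum_sgn2_mul_sgn2_eq_zero hab, sum_const, card_univ, Fintype.card_pi, ZMod.card,
    prod_const, Fintype.card_fin, nsmul_eq_mul, Nat.cast_pow, Nat.cast_ofNat, mul_one, add_zero]
  ring

end Walsh

lemma sq_eq_four_pow_of_sq_add_sq_eq (m : ℕ) {x y : ℤ} (h : x ^ 2 + y ^ 2 = 2 * 4 ^ m) :
    x ^ 2 = 4 ^ m := by
  induction m generalizing x y with
  | zero =>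
    have hx : |x| ≤ 1 := abs_le.mpr ⟨by nlinarith [sq_nonneg y], by nlinarith [sq_nonneg y]⟩
    have hy : |y| ≤ 1 := abs_le.mpr ⟨by nlinarith [sq_nonneg x], by nlinarith [sq_nonneg x]⟩
    rw [abs_le] at hx hy
    obtain ⟨_, _⟩ := hx; obtain ⟨_, _⟩ := hy
    interval_cases x <;> interval_cases y <;> simp_all
  | succ m ih =>
    -- squares are `0` or `1 mod 4`, so `x² + y² ≡ 0 mod 4` forces both `x` and `y` even
    have hsq : ∀ z : ℤ, z ^ 2 % 4 = if Even z then 0 else 1 := by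
      intro z
      split_ifs with hz
      · obtain ⟨p, rfl⟩ := hz; rw [show (p + p) ^ 2 = 4 * p ^ 2 by ring]; simp
      · exact Int.sq_mod_four_eq_one_of_odd (Int.not_even_iff_odd.mp hz)
    have h4 : (x ^ 2 + y ^ 2) % 4 = 0 := by rw [h, pow_succ]; simp [← mul_assoc]
    obtain ⟨p, rfl⟩ : Even x := by
      by_contra hx; have := hsq x; have := hsq y; split_ifs at * <;> omega
    obtain ⟨q, rfl⟩ : Even y := by
      by_contra hy; have := hsq (p + p); have := hsq y; split_ifs at * <;> omega
    have hpq : p ^ 2 + q ^ 2 = 2 * 4 ^ m := by rw [pow_succ (4 : ℤ)] at h; linarith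
    rw [pow_succ (4 : ℤ), ← ih hpq]; ring

section Z4

variable {n : ℕ}

lemma I_pow_val_add_two_mul_val (p q : ZMod 2) :
    I ^ (p.val + 2 * q.val) = (1 + I) / 2 * sgn2 q + (1 - I) / 2 * sgn2 (p + q) := by
  have h01 : ∀ r : ZMod 2, r = 0 ∨ r = 1 := by decide
  have h11 : (1 + 1 : ZMod 2) = 0 := rfl
  have hv : (1 : ZMod 2).val = 1 := rfl
  rcases h01 p with rfl | rfl <;> rcases h01 q with rfl | rfl <;>
    simp [sgn2, h11, hv, pow_succ] <;> ring

lemma normSq_half_one_add_I_mul_add (A B : ℤ) :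
    normSq ((1 + I) / 2 * A + (1 - I) / 2 * B) = (A ^ 2 + B ^ 2) / 2 := by
  simp [normSq_apply]; ring

lemma sum_I_pow_mul_chr_eq (a0 a1 : (Fin n → ZMod 2) → ZMod 2) (u : Fin n → ZMod 2) :
    ∑ x, I ^ ((a0 x).val + 2 * (a1 x).val) * chr u x
      = (1 + I) / 2 * walsh a1 u + (1 - I) / 2 * walsh (a0 + a1) u := by
  simp only [I_pow_val_add_two_mul_val, chr_eq_sgn2, walsh, Pi.add_apply, add_mul, sum_add_distrib,
    mul_assoc, ← mul_sum]
  push_cast; rfl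

lemma val_natCast_val_add_two_mul_val (p q : ZMod 2) :
    ((p.val + 2 * q.val : ℕ) : ZMod 4).val = p.val + 2 * q.val := by
  revert p q; decide

lemma natCast_val_add_two_mul_val_mem_iff (p q : ZMod 2) :
    ((p.val + 2 * q.val : ℕ) : ZMod 4) ∈ ({2, 3} : Finset (ZMod 4)) ↔ q = 1 := by
  revert p q; decide

lemma isBent_of_gbent (hn : Even n) {f : (Fin n → ZMod 2) → ZMod 4}
    {a0 a1 : (Fin n → ZMod 2) → ZMod 2}
    (hf : ∀ x, f x = (((a0 x).val + 2 * (a1 x).val : ℕ) : ZMod 4))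
    (hgbent : ∀ u : Fin n → ZMod 2,
      ‖∑ x, Complex.I ^ (f x).val * chr u x‖ = Real.sqrt (2 ^ n)) :
    IsBent a1 := by
  intro u
  obtain ⟨m, hm⟩ := hn
  have h4 : (2 : ℤ) ^ n = 4 ^ m := by rw [hm, ← two_mul, pow_mul]; norm_num
  have hsum : (walsh a1 u : ℝ) ^ 2 + (walsh (a0 + a1) u : ℝ) ^ 2 = 2 * 2 ^ n := by
    have := congrArg (· ^ 2) (hgbent u)
    simp only [hf, val_natCast_val_add_two_mul_val, sum_I_pow_mul_chr_eq, Complex.sq_norm,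
      normSq_half_one_add_I_mul_add, Real.sq_sqrt (by positivity : (0 : ℝ) ≤ 2 ^ n)] at this
    linarith
  rw [h4]
  exact sq_eq_four_pow_of_sq_add_sq_eq m (by rw [← h4]; exact_mod_cast hsum)

end Z4

/-- If `f = a₀ + 2a₁ : V_n → Z₄` (`n` even) is gbent, then `|N_{{2,3}}(a,b)|` is the same for
all pairs of distinct vertices. -/
theorem gbent_N23_constant (n : ℕ) (hn : Even n)
    (f : (Fin n → ZMod 2) → ZMod 4) (a0 a1 : (Fin n → ZMod 2) → ZMod 2)
    (hf : ∀ x, f x = (((a0 x).val + 2 * (a1 x).val : ℕ) : ZMod 4))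
    (hgbent : ∀ u : Fin n → ZMod 2,
      ‖∑ x, Complex.I ^ (f x).val * chr u x‖ = Real.sqrt (2 ^ n)) :
    ∀ a b c d : Fin n → ZMod 2, a ≠ b → c ≠ d →
      (univ.filter (fun w : Fin n → ZMod 2 =>
        f (w + a) ∈ ({2, 3} : Finset (ZMod 4)) ∧ f (w + b) ∈ ({2, 3} : Finset (ZMod 4)))).card =
      (univ.filter (fun w : Fin n → ZMod 2 =>
        f (w + c) ∈ ({2, 3} : Finset (ZMod 4)) ∧ f (w + d) ∈ ({2, 3} : Finset (ZMod 4)))).card := by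
  intro a b c d hab hcd
  have hbent : IsBent a1 := isBent_of_gbent hn hf hgbent
  have hmem : ∀ x, f x ∈ ({2, 3} : Finset (ZMod 4)) ↔ a1 x = 1 := fun x => by
    rw [hf, natCast_val_add_two_mul_val_mem_iff]
  simp only [hmem]
  have := (hbent.four_mul_card_filter hab).trans (hbent.four_mul_card_filter hcd).symm
  exact_mod_cast mul_left_cancel₀ four_ne_zero this
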